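/- With the overlaps p as above and j ∉ {k₁, k₂}, one has X_{k₁j}² (p_{k₁k₁}p_{k₂k₂} − p_{k₁k₂}²) = 2((p_{jj}p_{k₂k₂} − p_{jk₂}²) − (p_{k₁k₁}p_{k₂k₂} − p_{k₁k₂}²)). -/

import Mathlib

/-!
`X_{kl}` is the derivative along the vector field `rotField k l u` (row `l` equal to `u_k`, row `k`
equal to `−u_l`, zero elsewhere), so it is a derivation, and on an overlap it acts through
`X_{kl} p_{ab} = Σ_{α∈I} (w_a(α) u_b(α) + u_a(α) w_b(α))`, `w = rotField k l u`. Thus `X_{k₁j}`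
kills `p_{k₂k₂}` and trades the index `k₁` for `j` (up to sign) in the other overlaps. Applying
this twice to `p_{k₁k₁}p_{k₂k₂} − p_{k₁k₂}²` gives the jump relation; `C₀` only reappears through
`X_{k₁j} p_{k₁j} = p_{k₁k₁} − p_{jj}`, where it cancels.
-/

/-- The overlap `p_{kℓ} = Σ_{α∈I} u_k(α) u_ℓ(α) − C₀·1_{k=ℓ}` as a function of the
configuration of vectors `u : Fin N → Fin N → ℝ`. -/
def pOv {N : ℕ} (I : Finset (Fin N)) (C₀ : ℝ) (k l : Fin N)
    (u : Fin N → Fin N → ℝ) : ℝ :=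
  (∑ α ∈ I, u k α * u l α) - if k = l then C₀ else 0

/-- The rotation generator `X_{kℓ} = Σ_α (u_k(α) ∂_{u_ℓ(α)} − u_ℓ(α) ∂_{u_k(α)})`
acting on smooth functions of the configuration `u`. -/
noncomputable def XU {N : ℕ} (k l : Fin N) (f : (Fin N → Fin N → ℝ) → ℝ)
    (u : Fin N → Fin N → ℝ) : ℝ :=
  ∑ α : Fin N,
    (u k α * fderiv ℝ f u (Pi.single l (Pi.single α 1))
      - u l α * fderiv ℝ f u (Pi.single k (Pi.single α 1)))

section
variable {N : ℕ}

def rotField (k l : Fin N) (u : Fin N → Fin N → ℝ) : Fin N → Fin N → ℝ :=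
  Pi.single l (u k) - Pi.single k (u l)

lemma sum_smul_single_single {ι κ R : Type*} [DecidableEq ι] [Fintype κ] [DecidableEq κ]
    [Semiring R] (l : ι) (c : κ → R) :
    ∑ α, c α • (Pi.single l (Pi.single α 1) : ι → κ → R) = Pi.single l c := by
  ext m β
  by_cases hm : m = l
  · subst hm; simp [Pi.single_apply]
  · simp [hm]

lemma XU_eq_fderiv_rotField (k l : Fin N) (f : (Fin N → Fin N → ℝ) → ℝ)
    (u : Fin N → Fin N → ℝ) : XU k l f u = fderiv ℝ f u (rotField k l u) := by
  rw [rotField, ← sum_smul_single_single l (u k), ← sum_smul_single_single k (u l)]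
  simp only [XU, map_sub, map_sum, map_smul, smul_eq_mul, Finset.sum_sub_distrib]

lemma fderiv_pOv_apply (I : Finset (Fin N)) (C₀ : ℝ) (a b : Fin N) (u w : Fin N → Fin N → ℝ) :
    fderiv ℝ (pOv I C₀ a b) u w = ∑ α ∈ I, (w a α * u b α + u a α * w b α) := by
  unfold pOv
  simp (disch := fun_prop) only [fderiv_sub_const, fderiv_fun_sum, fderiv_fun_mul, fderiv_apply,
    fderiv_fun_id, ContinuousLinearMap.comp_id, sum_apply, add_apply, smul_apply,
    ContinuousLinearMap.comp_apply, ContinuousLinearMap.proj_apply, smul_eq_mul]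
  exact Finset.sum_congr rfl fun _ _ => by ring

@[fun_prop]
lemma differentiable_pOv (I : Finset (Fin N)) (C₀ : ℝ) (a b : Fin N) :
    Differentiable ℝ (pOv I C₀ a b) := by
  unfold pOv; fun_prop

section Leibniz
variable (k l : Fin N) {f g : (Fin N → Fin N → ℝ) → ℝ} {u : Fin N → Fin N → ℝ}

lemma XU_sub (hf : DifferentiableAt ℝ f u) (hg : DifferentiableAt ℝ g u) :
    XU k l (fun v => f v - g v) u = XU k l f u - XU k l g u := by
  simp only [XU_eq_fderiv_rotField, fderiv_fun_sub hf hg, sub_apply]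

lemma XU_mul (hf : DifferentiableAt ℝ f u) (hg : DifferentiableAt ℝ g u) :
    XU k l (fun v => f v * g v) u = XU k l f u * g u + f u * XU k l g u := by
  simp only [XU_eq_fderiv_rotField, fderiv_fun_mul hf hg, add_apply,
    smul_apply, smul_eq_mul]
  ring

lemma XU_const_mul (c : ℝ) (hf : DifferentiableAt ℝ f u) :
    XU k l (fun v => c * f v) u = c * XU k l f u := by
  simp only [XU_eq_fderiv_rotField, fderiv_const_mul hf, smul_apply, smul_eq_mul]

lemma XU_sq (hf : DifferentiableAt ℝ f u) :
    XU k l (fun v => f v ^ 2) u = 2 * f u * XU k l f u := by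
  simp only [sq, XU_mul k l hf hf]
  ring

end Leibniz

section rotField
variable {k l m : Fin N} (u : Fin N → Fin N → ℝ)

@[simp] lemma rotField_apply_left (hkl : k ≠ l) : rotField k l u k = -u l := by
  simp [rotField, hkl]

@[simp] lemma rotField_apply_right (hkl : k ≠ l) : rotField k l u l = u k := by
  simp [rotField, hkl.symm]

@[simp] lemma rotField_apply_of_ne (hk : m ≠ k) (hl : m ≠ l) : rotField k l u m = 0 := by
  simp [rotField, hk, hl]

end rotField

section pOv
variable (I : Finset (Fin N)) (C₀ : ℝ) {k l a b : Fin N} (u : Fin N → Fin N → ℝ)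

lemma pOv_of_ne (hab : a ≠ b) : pOv I C₀ a b u = ∑ α ∈ I, u a α * u b α := by
  simp [pOv, hab]

lemma XU_pOv : XU k l (pOv I C₀ a b) u =
    ∑ α ∈ I, (rotField k l u a α * u b α + u a α * rotField k l u b α) := by
  rw [XU_eq_fderiv_rotField, fderiv_pOv_apply]

lemma XU_pOv_self_left (hkl : k ≠ l) : XU k l (pOv I C₀ k k) u = -2 * pOv I C₀ k l u := by
  rw [XU_pOv, pOv_of_ne I C₀ u hkl, Finset.mul_sum]
  exact Finset.sum_congr rfl fun α _ => by simp [hkl]; ring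

lemma XU_pOv_left_right (hkl : k ≠ l) :
    XU k l (pOv I C₀ k l) u = pOv I C₀ k k u - pOv I C₀ l l u := by
  rw [XU_pOv]
  simp only [rotField_apply_left u hkl, rotField_apply_right u hkl, Pi.neg_apply, neg_mul, pOv,
    if_pos, sub_sub_sub_cancel_right, ← Finset.sum_sub_distrib]
  exact Finset.sum_congr rfl fun α _ => by ring

lemma XU_pOv_left_of_ne (hkl : k ≠ l) (hbk : b ≠ k) (hbl : b ≠ l) :
    XU k l (pOv I C₀ k b) u = -pOv I C₀ l b u := by
  rw [XU_pOv, pOv_of_ne I C₀ u hbl.symm, ← Finset.sum_neg_distrib]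
  exact Finset.sum_congr rfl fun α _ => by simp [hkl, hbk, hbl]

lemma XU_pOv_right_of_ne (hkl : k ≠ l) (hbk : b ≠ k) (hbl : b ≠ l) :
    XU k l (pOv I C₀ l b) u = pOv I C₀ k b u := by
  rw [XU_pOv, pOv_of_ne I C₀ u hbk.symm]
  exact Finset.sum_congr rfl fun α _ => by simp [hkl, hbk, hbl]

lemma XU_pOv_of_ne (hak : a ≠ k) (hal : a ≠ l) (hbk : b ≠ k) (hbl : b ≠ l) :
    XU k l (pOv I C₀ a b) u = 0 := by
  simp [XU_pOv, hak, hal, hbk, hbl]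

end pOv

end

/-- Jump relation of the Fermionic eigenvector moment flow for the determinant
observable `f(k₁,k₂) = p_{k₁k₁}p_{k₂k₂} − p_{k₁k₂}²`: for `j ∉ {k₁,k₂}`,
`X_{k₁j}² f(k₁,k₂) = 2 (f(j,k₂) − f(k₁,k₂))`. -/
theorem Xrot_sq_det_jump {N : ℕ} (I : Finset (Fin N)) (C₀ : ℝ)
    (k₁ k₂ j : Fin N) (h : k₁ ≠ k₂) (hj₁ : j ≠ k₁) (hj₂ : j ≠ k₂)
    (u : Fin N → Fin N → ℝ) :
    XU k₁ j (XU k₁ j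
        (fun v => pOv I C₀ k₁ k₁ v * pOv I C₀ k₂ k₂ v - (pOv I C₀ k₁ k₂ v) ^ 2)) u
      = 2 * ((pOv I C₀ j j u * pOv I C₀ k₂ k₂ u - (pOv I C₀ j k₂ u) ^ 2)
        - (pOv I C₀ k₁ k₁ u * pOv I C₀ k₂ k₂ u - (pOv I C₀ k₁ k₂ u) ^ 2)) := by
  have hk₁j : k₁ ≠ j := hj₁.symm
  have hk₂k₁ : k₂ ≠ k₁ := h.symm
  have hk₂j : k₂ ≠ j := hj₂.symm
  have hXp₂₂ (v) : XU k₁ j (pOv I C₀ k₂ k₂) v = 0 :=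
    XU_pOv_of_ne I C₀ v hk₂k₁ hk₂j hk₂k₁ hk₂j
  have hXp₁₂ (v) : XU k₁ j (pOv I C₀ k₁ k₂) v = -pOv I C₀ j k₂ v :=
    XU_pOv_left_of_ne I C₀ v hk₁j hk₂k₁ hk₂j
  have hXdet : XU k₁ j
      (fun v => pOv I C₀ k₁ k₁ v * pOv I C₀ k₂ k₂ v - (pOv I C₀ k₁ k₂ v) ^ 2)
      = fun v => 2 * (pOv I C₀ k₁ k₂ v * pOv I C₀ j k₂ v - pOv I C₀ k₁ j v * pOv I C₀ k₂ k₂ v) := by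
    funext v
    rw [XU_sub _ _ (by fun_prop) (by fun_prop), XU_mul _ _ (by fun_prop) (by fun_prop),
      XU_sq _ _ (by fun_prop), XU_pOv_self_left I C₀ v hk₁j, hXp₂₂, hXp₁₂]
    ring
  rw [hXdet, XU_const_mul _ _ _ (by fun_prop), XU_sub _ _ (by fun_prop) (by fun_prop),
    XU_mul _ _ (by fun_prop) (by fun_prop), XU_mul _ _ (by fun_prop) (by fun_prop), hXp₂₂, hXp₁₂,
    XU_pOv_right_of_ne I C₀ u hk₁j hk₂k₁ hk₂j, XU_pOv_left_right I C₀ u hk₁j]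
  ring
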